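/- arXiv:1502.01580 — 2 statements merged into one kernel-verified Lean document; each statement's English description precedes it below -/
import Mathlib

section
/- Let G be a connected finite simple graph with vertex set V(G) = {v_1, …, v_n} and let μ(G) be the Mycielskian of G. Then for all 1 ≤ i < j ≤ n, the distance in μ(G) between v_i and v_j satisfies d_{μ(G)}(v_i, v_j) = min(d_G(v_i, v_j), 4); that is, d_{μ(G)}(v_i, v_j) = d_G(v_i, v_j) whenever d_G(v_i, v_j) ≤ 3, and d_{μ(G)}(v_i, v_j) = 4 whenever d_G(v_i, v_j) ≥ 4. -/
open SimpleGraph Finset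

/-- The Mycielskian of a simple graph `G`. Vertices: `some (Sum.inl a)` are the original
vertices `v_a`, `some (Sum.inr a)` are the copies `x_a`, and `none` is the extra vertex `x`. -/
def mycielskian {V : Type*} (G : SimpleGraph V) : SimpleGraph (Option (V ⊕ V)) where
  Adj u v := match u, v with
    | some (Sum.inl a), some (Sum.inl b) => G.Adj a b
    | some (Sum.inl a), some (Sum.inr b) => G.Adj a b
    | some (Sum.inr a), some (Sum.inl b) => G.Adj a b
    | some (Sum.inr _), none => True
    | none, some (Sum.inr _) => True
    | _, _ => False
  symm := by
    refine ⟨?_⟩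
    rintro (_ | (a | a)) (_ | (b | b)) h <;> first | exact h.symm | exact h
  loopless := by
    refine ⟨?_⟩
    rintro (_ | (a | a)) h
    · exact h
    · exact G.loopless.irrefl a h
    · exact h

instance mycielskian.adjDecidable {V : Type*} (G : SimpleGraph V) [DecidableRel G.Adj] :
    DecidableRel (mycielskian G).Adj := fun u v =>
  match u, v with
  | some (Sum.inl a), some (Sum.inl b) => inferInstanceAs (Decidable (G.Adj a b))
  | some (Sum.inl a), some (Sum.inr b) => inferInstanceAs (Decidable (G.Adj a b))
  | some (Sum.inr a), some (Sum.inl b) => inferInstanceAs (Decidable (G.Adj a b))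
  | some (Sum.inr _), none => inferInstanceAs (Decidable True)
  | none, some (Sum.inr _) => inferInstanceAs (Decidable True)
  | none, none => inferInstanceAs (Decidable False)
  | none, some (Sum.inl _) => inferInstanceAs (Decidable False)
  | some (Sum.inl _), none => inferInstanceAs (Decidable False)
  | some (Sum.inr _), some (Sum.inr _) => inferInstanceAs (Decidable False)

/-!
A walk between original vertices of `μ(G)` either avoids `x`, and then collapsing each `x_c`
onto `v_c` turns it into a walk of `G` of the same length, or it passes through `x`, whose
neighbours are all copies, so it has length at least `2 + 2`. Conversely every walk of `G`
lifts to the originals, and `v_a – x_a' – x – x_b' – v_b` is a walk of length 4 as soon as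
`a` and `b` have neighbours `a'` and `b'`.
-/

section Mycielskian

variable {V : Type*} {G : SimpleGraph V}

variable (G) in
def mycielskianInl : G →g mycielskian G where
  toFun a := some (Sum.inl a)
  map_rel' h := h

/-- The value `d` at `x` is junk: only walks avoiding `x` are ever projected. -/
def mycielskianProj (d : V) : Option (V ⊕ V) → V
  | some (Sum.inl a) => a
  | some (Sum.inr a) => a
  | none => d

lemma mycielskian_adj_proj (d : V) {u v : Option (V ⊕ V)} (h : (mycielskian G).Adj u v)
    (hu : u ≠ none) (hv : v ≠ none) : G.Adj (mycielskianProj d u) (mycielskianProj d v) := by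
  match u, v with
  | some (Sum.inl _), some (Sum.inl _) | some (Sum.inl _), some (Sum.inr _)
  | some (Sum.inr _), some (Sum.inl _) => exact h
  | some (Sum.inr _), some (Sum.inr _) => exact h.elim
  | none, _ => exact absurd rfl hu
  | some _, none => exact absurd rfl hv

lemma mycielskian_dist_proj_le_length (d : V) {u v : Option (V ⊕ V)}
    (w : (mycielskian G).Walk u v) (hw : none ∉ w.support) :
    G.dist (mycielskianProj d u) (mycielskianProj d v) ≤ w.length := by
  induction w with
  | nil => simp
  | @cons u v v' h w ih =>
    rw [Walk.support_cons, List.mem_cons, not_or] at hw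
    have hv : v ≠ none := fun hv => hw.2 (hv ▸ w.start_mem_support)
    have hadj := mycielskian_adj_proj d h (Ne.symm hw.1) hv
    calc G.dist (mycielskianProj d u) (mycielskianProj d v')
        ≤ G.dist (mycielskianProj d u) (mycielskianProj d v) +
            G.dist (mycielskianProj d v) (mycielskianProj d v') :=
          hadj.reachable.dist_triangle_left _
      _ ≤ 1 + w.length := by grw [dist_eq_one_iff_adj.mpr hadj, ih hw.2]
      _ = (w.cons h).length := by rw [Walk.length_cons, add_comm]

lemma mycielskian_two_le_length_walk_inl_none {a : V}
    (w : (mycielskian G).Walk (some (Sum.inl a)) none) : 2 ≤ w.length := by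
  cases w with
  | cons h w =>
    cases w with
    | nil => exact h.elim
    | cons => simp

lemma mycielskian_four_le_length_of_none_mem_support {a b : V}
    (w : (mycielskian G).Walk (some (Sum.inl a)) (some (Sum.inl b))) (hw : none ∈ w.support) :
    4 ≤ w.length := by
  classical
  have h₁ := mycielskian_two_le_length_walk_inl_none (w.takeUntil none hw)
  have h₂ := mycielskian_two_le_length_walk_inl_none (w.dropUntil none hw).reverse
  rw [Walk.length_reverse] at h₂
  rw [← w.take_spec hw, Walk.length_append]
  omega

lemma mycielskian_min_dist_four_le_length {a b : V}
    (w : (mycielskian G).Walk (some (Sum.inl a)) (some (Sum.inl b))) :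
    min (G.dist a b) 4 ≤ w.length := by
  by_cases hw : none ∈ w.support
  · exact (min_le_right _ _).trans (mycielskian_four_le_length_of_none_mem_support w hw)
  · exact (min_le_left _ _).trans (mycielskian_dist_proj_le_length a w hw)

lemma mycielskian_dist_inl_le_dist {a b : V} (h : G.Reachable a b) :
    (mycielskian G).dist (some (Sum.inl a)) (some (Sum.inl b)) ≤ G.dist a b := by
  obtain ⟨p, hp⟩ := h.exists_walk_length_eq_dist
  have h := dist_le (p.map (mycielskianInl G))
  rwa [Walk.length_map, hp] at h

lemma mycielskian_dist_inl_le_four {a a' b b' : V} (ha : G.Adj a a') (hb : G.Adj b' b) :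
    (mycielskian G).dist (some (Sum.inl a)) (some (Sum.inl b)) ≤ 4 :=
  dist_le <| .cons (show (mycielskian G).Adj (some (Sum.inl a)) (some (Sum.inr a')) from ha) <|
    .cons (v := none) trivial <| .cons (v := some (Sum.inr b')) trivial <|
      .cons (show (mycielskian G).Adj (some (Sum.inr b')) (some (Sum.inl b)) from hb) .nil

lemma mycielskian_dist_inl_inl (hG : G.Connected) (a b : V) :
    (mycielskian G).dist (some (Sum.inl a)) (some (Sum.inl b)) = min (G.dist a b) 4 := by
  obtain rfl | hab := eq_or_ne a b
  · simp
  obtain ⟨p⟩ := hG a b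
  have hp : ¬p.Nil := p.not_nil_of_ne hab
  obtain ⟨w, hw⟩ := ((hG a b).map (mycielskianInl G)).exists_walk_length_eq_dist
  refine le_antisymm (le_min (mycielskian_dist_inl_le_dist (hG a b)) ?_) ?_
  · exact mycielskian_dist_inl_le_four (p.adj_snd hp) (p.adj_penultimate hp)
  · exact hw ▸ mycielskian_min_dist_four_le_length w

end Mycielskian

theorem mycielskian_dist_originals (n : ℕ) (G : SimpleGraph (Fin n)) (hG : G.Connected) :
    ∀ i j : Fin n, i < j →
      (mycielskian G).dist (some (Sum.inl i)) (some (Sum.inl j)) = min (G.dist i j) 4 :=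
  fun i j _ => mycielskian_dist_inl_inl hG i j
end

section
/- Let G be a connected finite simple graph with at least two vertices and let μ(G) be the Mycielskian of G. Then μ(G) is connected and its diameter is at most 4, i.e., d_{μ(G)}(u, v) ≤ 4 for all vertices u, v of μ(G). -/
open SimpleGraph Finset

/-!
A connected graph on at least two vertices has no isolated vertex, so in `μ(G)` every vertex is
within distance 2 of the apex `x`: `x_a ~ x`, and `v_a ~ x_b ~ x` for any neighbour `b` of `a`.
Routing through `x` then gives connectivity and diameter at most 4.
-/

namespace SimpleGraph

variable {W : Type*} {H : SimpleGraph W}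

theorem connected_of_forall_reachable (c : W) (h : ∀ u, H.Reachable u c) : H.Connected :=
  haveI : Nonempty W := ⟨c⟩
  Connected.mk fun u v => (h u).trans (h v).symm

theorem dist_le_two_mul_of_forall_exists_walk_length_le (c : W) {r : ℕ}
    (h : ∀ u, ∃ p : H.Walk u c, p.length ≤ r) (u v : W) : H.dist u v ≤ 2 * r := by
  obtain ⟨p, hp⟩ := h u
  obtain ⟨q, hq⟩ := h v
  calc H.dist u v ≤ (p.append q.reverse).length := dist_le _
    _ = p.length + q.length := by simp
    _ ≤ 2 * r := by omega

end SimpleGraph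

section Mycielskian

variable {V : Type*} {G : SimpleGraph V}

theorem mycielskian_adj_inl_inr {a b : V} (h : G.Adj a b) :
    (mycielskian G).Adj (some (Sum.inl a)) (some (Sum.inr b)) :=
  h

theorem mycielskian_adj_inr_none (a : V) : (mycielskian G).Adj (some (Sum.inr a)) none :=
  trivial

theorem mycielskian_exists_walk_to_none_length_le_two (hG : ∀ a, ∃ b, G.Adj a b)
    (u : Option (V ⊕ V)) : ∃ p : (mycielskian G).Walk u none, p.length ≤ 2 := by
  rcases u with _ | a | a
  · exact ⟨.nil, by simp⟩
  · obtain ⟨b, hab⟩ := hG a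
    exact ⟨.cons (mycielskian_adj_inl_inr hab) (.cons (mycielskian_adj_inr_none b) .nil),
      by simp⟩
  · exact ⟨.cons (mycielskian_adj_inr_none a) .nil, by simp⟩

end Mycielskian

theorem mycielskian_connected_diam_le_four {V : Type*} [Fintype V]
    (hV : 2 ≤ Fintype.card V) (G : SimpleGraph V) (hG : G.Connected) :
    (mycielskian G).Connected ∧
      ∀ u v : Option (V ⊕ V), (mycielskian G).dist u v ≤ 4 := by
  have : Nontrivial V := Fintype.one_lt_card_iff_nontrivial.mp hV
  have hwalk := mycielskian_exists_walk_to_none_length_le_two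
    hG.preconnected.exists_adj_of_nontrivial
  exact ⟨connected_of_forall_reachable none fun u => ⟨(hwalk u).choose⟩,
    dist_le_two_mul_of_forall_exists_walk_length_le none hwalk⟩
end
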